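/- arXiv:2007.04683 — 3 statements merged into one kernel-verified Lean document; each statement's English description precedes it below -/
import Mathlib

section
/- Let K ⊂ ℝⁿ be a convex body with 0 ∈ int(K), and define K₀ = ⋃_{p ∈ ∂K} (-p + K). Then K₀ is a convex set. -/
/-!
Every point of `K₀` has the form `(p + w) - p` with `p ∈ ∂K ⊆ K`, so `K₀ ⊆ K - K`. Conversely, for
`a, b ∈ K` with `v = a - b ≠ 0`, minimize a linear functional `f` with `f v > 0` over the compact set
of `q ∈ K` with `q + v ∈ K` (it contains `b`): a minimizer `p` lies on `∂K`, since from an interior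
point one could still move a little in direction `-v` (convexity keeps `q + v` in `K`), and then
`a - b = -p + (p + v) ∈ -p + K`. Hence `K₀ = K - K` (or `K₀ = ∅` when `∂K = ∅`), and a Minkowski
difference of convex sets is convex.
-/

open Pointwise Filter Topology

variable {E : Type*} [NormedAddCommGroup E] [NormedSpace ℝ E]

theorem Convex.exists_mem_frontier_add_mem {K : Set E} (hK_convex : Convex ℝ K)
    (hK_compact : IsCompact K) {v : E} (hv : v ≠ 0) {q : E} (hq : q ∈ K) (hqv : q + v ∈ K) :
    ∃ p ∈ frontier K, p + v ∈ K := by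
  set L := K ∩ (· + v) ⁻¹' K
  have hL : IsCompact L :=
    hK_compact.inter_right (hK_compact.isClosed.preimage (continuous_add_const v))
  obtain ⟨f, -, hfv⟩ := exists_dual_vector'' ℝ v
  obtain ⟨p, ⟨hpK, hpvK⟩, hmin⟩ := hL.exists_isMinOn ⟨q, hq, hqv⟩ f.continuous.continuousOn
  refine ⟨p, ⟨subset_closure hpK, fun hp_int => ?_⟩, hpvK⟩
  have hnear : ∀ᶠ t in 𝓝 (0 : ℝ), p - t • v ∈ K ∧ t < 1 := by
    refine ((Continuous.tendsto (by fun_prop) 0).eventually_mem ?_).and (gt_mem_nhds one_pos)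
    simpa using mem_interior_iff_mem_nhds.mp hp_int
  obtain ⟨t, ⟨htK, ht1⟩, ht0 : 0 < t⟩ := ((hnear.filter_mono nhdsWithin_le_nhds).and
    self_mem_nhdsWithin).exists (f := 𝓝[>] (0 : ℝ))
  have htvK : p - t • v + v ∈ K := by
    have := hK_convex hpK hpvK ht0.le (sub_nonneg.mpr ht1.le) (add_sub_cancel t 1)
    convert this using 1
    module
  have hdecrease : f (p - t • v) < f p := by
    simpa [hfv] using mul_pos ht0 (norm_pos_iff.mpr hv)
  exact (hmin ⟨htK, htvK⟩).not_gt hdecrease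

theorem Convex.iUnion_frontier_neg_vadd_eq_sub {K : Set E} (hK_convex : Convex ℝ K)
    (hK_compact : IsCompact K) (hfr : (frontier K).Nonempty) :
    ⋃ p ∈ frontier K, (-p +ᵥ K) = K - K := by
  have hmem (p w : E) : w ∈ -p +ᵥ K ↔ p + w ∈ K := by
    rw [Set.mem_vadd_set_iff_neg_vadd_mem, neg_neg, vadd_eq_add]
  have hfrK : frontier K ⊆ K := hK_compact.isClosed.frontier_subset
  ext w
  simp only [Set.mem_iUnion, hmem, exists_prop]
  constructor
  · rintro ⟨p, hp, hpw⟩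
    exact ⟨p + w, hpw, p, hfrK hp, add_sub_cancel_left p w⟩
  · rintro ⟨a, ha, b, hb, rfl⟩
    rcases eq_or_ne (a - b) 0 with hab | hab
    · obtain ⟨p, hp⟩ := hfr
      exact ⟨p, hp, by simpa [hab] using hfrK hp⟩
    · exact hK_convex.exists_mem_frontier_add_mem hK_compact hab hb (by rwa [add_sub_cancel])

theorem pansu_wulff_stmt6_general {n : ℕ}
    (K : Set (EuclideanSpace ℝ (Fin n)))
    (hK_compact : IsCompact K) (hK_convex : Convex ℝ K) :
    Convex ℝ (⋃ p ∈ frontier K, (-p +ᵥ K)) := by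
  rcases (frontier K).eq_empty_or_nonempty with hfr | hfr
  · simp only [hfr, Set.mem_empty_iff_false, Set.iUnion_of_empty, Set.iUnion_empty]
    exact convex_empty
  · rw [hK_convex.iUnion_frontier_neg_vadd_eq_sub hK_compact hfr]
    exact hK_convex.sub hK_convex

/-- For a convex body `K ⊂ ℝⁿ` with `0 ∈ int K`, the set
`K₀ = ⋃_{p ∈ ∂K} (-p + K)` is convex. -/
theorem pansu_wulff_stmt6 {n : ℕ}
    (K : Set (EuclideanSpace ℝ (Fin n)))
    (hK_compact : IsCompact K) (hK_convex : Convex ℝ K)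
    (hK_zero : (0 : EuclideanSpace ℝ (Fin n)) ∈ interior K) :
    Convex ℝ (⋃ p ∈ frontier K, (-p +ᵥ K)) :=
  pansu_wulff_stmt6_general K hK_compact hK_convex
end

section
/- Let K ⊂ ℝ² be a strictly convex body, x a nonzero vector in the interior of the difference body K - K, and consider segments [p, p+x] contained in K with both endpoints p, p+x on ∂K. Then there exist exactly two such points p. -/
/-!
Let `L = K ∩ (K - x)` be the set of `p` with `[p, p + x] ⊆ K`, and `φ` a linear functional with
kernel `ℝ x`. At a maximiser of `φ` on the compact set `L` both `p` and `p + x` lie on `∂K`, and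
the same holds for a minimiser; the two differ because `L` has interior points, which is where
`x ∈ int (K - K)` enters. Conversely, `L` is strictly convex, so any other `p ∈ L` has the same
`φ`-value as an interior point `c` of `L`. In the plane this forces `c = p + r x`, and then `p` or
`p + x` lies strictly between a point of `K` and an interior point of `K`.
-/

open Set Module Pointwise

def chordStarts {E : Type*} [Add E] (K : Set E) (x : E) : Set E := K ∩ (· + x) ⁻¹' K

section chordStarts

variable {E : Type*} [NormedAddCommGroup E] {K : Set E} {x : E}

theorem interior_chordStarts : interior (chordStarts K x) = chordStarts (interior K) x := by
  rw [chordStarts, interior_inter]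
  exact congrArg _ ((Homeomorph.addRight x).preimage_interior K).symm

theorem IsCompact.chordStarts (hK : IsCompact K) : IsCompact (chordStarts K x) :=
  hK.of_isClosed_subset (hK.isClosed.inter (hK.isClosed.preimage (continuous_add_const x)))
    inter_subset_left

end chordStarts

variable {E : Type*} [NormedAddCommGroup E] [NormedSpace ℝ E] {K : Set E} {x : E}

theorem ContinuousLinearMap.eq_zero_of_isMaxOn_of_mem_interior {φ : E →L[ℝ] ℝ} {s : Set E}
    {a : E} (h : IsMaxOn φ s a) (ha : a ∈ interior s) : φ = 0 :=
  (h.isLocalMax (mem_interior_iff_mem_nhds.1 ha)).hasFDerivAt_eq_zero φ.hasFDerivAt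

theorem exists_ker_eq_span_singleton (hE : finrank ℝ E = 2) (hx : x ≠ 0) :
    ∃ φ : E →L[ℝ] ℝ, LinearMap.ker (φ : E →ₗ[ℝ] ℝ) = ℝ ∙ x := by
  have : FiniteDimensional ℝ E := Module.finite_of_finrank_eq_succ hE
  have hQ : finrank ℝ (E ⧸ ℝ ∙ x) = finrank ℝ ℝ := by
    have := (ℝ ∙ x).finrank_quotient_add_finrank
    rw [finrank_span_singleton hx, hE] at this
    rw [finrank_self]; omega
  refine ⟨((LinearEquiv.ofFinrankEq _ _ hQ).toLinearMap ∘ₗ (ℝ ∙ x).mkQ).toContinuousLinearMap, ?_⟩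
  simp [LinearEquiv.ker_comp]

theorem StrictConvex.chordStarts (hK : StrictConvex ℝ K) : StrictConvex ℝ (chordStarts K x) :=
  hK.inter (by simpa only [add_comm] using hK.preimage_add_right x)

theorem interior_chordStarts_nonempty (hK : StrictConvex ℝ K) (hx : x ≠ 0)
    (hx_int : x ∈ interior (K - K)) : (interior (chordStarts K x)).Nonempty := by
  obtain ⟨t, ⟨a, ha, b, hb, hab : a - b = (1 + t) • x⟩, ht⟩ :
      ∃ t : ℝ, (1 + t) • x ∈ K - K ∧ 0 < t := by
    have hc : Continuous fun t : ℝ => (1 + t) • x := by fun_prop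
    have hlim := tendsto_nhdsWithin_of_tendsto_nhds (s := Ioi 0) (hc.tendsto' 0 x (by simp))
    exact ((hlim.eventually (mem_interior_iff_mem_nhds.1 hx_int)).and self_mem_nhdsWithin).exists
  have hba : b ≠ a := fun h => by
    rw [h, sub_self, eq_comm, smul_eq_zero] at hab
    exact hab.elim (fun h => by linarith) hx
  have hseg := hK.openSegment_subset hb ha hba
  rw [openSegment_eq_image', hab] at hseg
  rw [interior_chordStarts]
  refine ⟨b + (t / 2) • x, hseg ⟨(t / 2) / (1 + t), ⟨by positivity, ?_⟩, ?_⟩,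
    hseg ⟨(1 + t / 2) / (1 + t), ⟨by positivity, ?_⟩, ?_⟩⟩
  · rw [div_lt_one (by positivity)]; linarith
  · dsimp only; rw [smul_smul, div_mul_cancel₀ _ (by positivity)]
  · rw [div_lt_one (by positivity)]; linarith
  · dsimp only; rw [smul_smul, div_mul_cancel₀ _ (by positivity)]; module

theorem notMem_interior_of_isMaxOn_chordStarts (hK : Convex ℝ K) {φ : E →L[ℝ] ℝ} (hφ : φ ≠ 0)
    (hφx : φ x = 0) {p : E} (hpx : p + x ∈ K) (hmax : IsMaxOn φ (chordStarts K x) p) :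
    p ∉ interior K := by
  intro hp
  -- Near `p` the constraint `p ∈ K` is inactive, and a local maximum of `φ` on the convex set
  -- `K - x` is a global one; so `p + x`, hence also `p`, maximises `φ` on `K`.
  have hloc : IsLocalMaxOn φ ((· + x) ⁻¹' K) p :=
    Filter.mem_of_superset (inter_mem_nhdsWithin _ (mem_interior_iff_mem_nhds.1 hp))
      fun q hq => hmax ⟨hq.2, hq.1⟩
  have hglob := IsMaxOn.of_isLocalMaxOn_of_concaveOn (show p ∈ (· + x) ⁻¹' K from hpx) hloc
    ((φ : E →ₗ[ℝ] ℝ).concaveOn (hK.translate_preimage_left x))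
  refine hφ (φ.eq_zero_of_isMaxOn_of_mem_interior (fun q hq => ?_) hp)
  simpa [hφx] using hglob (show q - x + x ∈ K by simpa using hq)

theorem mem_frontier_of_isMaxOn_chordStarts (hKc : IsClosed K) (hK : Convex ℝ K)
    {φ : E →L[ℝ] ℝ} (hφ : φ ≠ 0) (hφx : φ x = 0) {p : E} (hp : p ∈ chordStarts K x)
    (hmax : IsMaxOn φ (chordStarts K x) p) : p ∈ frontier K ∧ p + x ∈ frontier K := by
  have hmax' : IsMaxOn φ (chordStarts K (-x)) (p + x) := fun q hq => by
    simpa [hφx] using hmax (show q + -x ∈ chordStarts K x from ⟨hq.2, by simpa using hq.1⟩)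
  rw [hKc.frontier_eq]
  exact ⟨⟨hp.1, notMem_interior_of_isMaxOn_chordStarts hK hφ hφx hp.2 hmax⟩,
    ⟨hp.2, notMem_interior_of_isMaxOn_chordStarts (x := -x) hK hφ (by simp [hφx])
      (by simpa using hp.1) hmax'⟩⟩

theorem ContinuousLinearMap.lt_of_isMaxOn_of_isMinOn {φ : E →L[ℝ] ℝ} (hφ : φ ≠ 0) {s : Set E}
    (hs : (interior s).Nonempty) {a b : E} (hmax : IsMaxOn φ s a) (hmin : IsMinOn φ s b) :
    φ b < φ a := by
  obtain ⟨z, hz⟩ := hs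
  by_contra! hab
  refine hφ (φ.eq_zero_of_isMaxOn_of_mem_interior (fun q hq => ?_) hz)
  exact (hmax hq).trans (hab.trans (hmin (interior_subset hz)))

theorem Convex.mem_interior_or_add_mem_interior (hK : Convex ℝ K) {p : E} (hp : p ∈ K)
    (hpx : p + x ∈ K) {r : ℝ} (hc : p + r • x ∈ interior K) (hcx : p + r • x + x ∈ interior K) :
    p ∈ interior K ∨ p + x ∈ interior K := by
  rcases lt_trichotomy r 0 with hr | rfl | hr
  · left
    have : 1 - r ≠ 0 := by linarith
    refine hK.openSegment_interior_self_subset_interior hc hpx ?_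
    rw [openSegment_eq_image']
    refine ⟨-r / (1 - r), ⟨div_pos (by linarith) (by linarith), ?_⟩, ?_⟩
    · rw [div_lt_one (by linarith)]; linarith
    · match_scalars <;> field_simp <;> ring
  · simp_all
  · right
    refine hK.openSegment_self_interior_subset_interior hp hcx ?_
    rw [openSegment_eq_image']
    refine ⟨1 / (r + 1), ⟨by positivity, ?_⟩, ?_⟩
    · rw [div_lt_one (by linarith)]; linarith
    · match_scalars <;> field_simp
      ring

theorem StrictConvex.exists_mem_interior_map_eq {s : Set E} (hs : StrictConvex ℝ s)
    (φ : E →ₗ[ℝ] ℝ) {a b p : E} (ha : a ∈ s) (hb : b ∈ s) (hp : p ∈ s) (hpa : p ≠ a)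
    (hpb : p ≠ b) (hφp : φ p ∈ Icc (φ a) (φ b)) : ∃ c ∈ interior s, φ c = φ p := by
  suffices ∀ a' ∈ s, ∀ b' ∈ s, a' ≠ b' → φ p ∈ openSegment ℝ (φ a') (φ b') →
      ∃ c ∈ interior s, φ c = φ p by
    rcases hφp.1.eq_or_lt with h | h
    · exact this p hp a ha hpa (by simp [← h])
    rcases hφp.2.eq_or_lt with h' | h'
    · exact this p hp b hb hpb (by simp [h'])
    refine this a ha b hb (fun hab => by simp [hab] at h h'; linarith) ?_
    rw [openSegment_eq_Ioo (h.trans h')]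
    exact ⟨h, h'⟩
  intro a' ha' b' hb' hab hφ
  obtain ⟨c, hc, hφc⟩ := image_openSegment ℝ φ.toAffineMap a' b' ▸ hφ
  exact ⟨c, hs.openSegment_subset ha' hb' hab hc, hφc⟩

theorem eq_or_eq_of_mem_frontier (hK : StrictConvex ℝ K) (hKc : IsClosed K) {φ : E →ₗ[ℝ] ℝ}
    (hφ : LinearMap.ker φ = ℝ ∙ x) {p₁ p₂ p : E} (hp₁ : p₁ ∈ chordStarts K x)
    (hp₂ : p₂ ∈ chordStarts K x) (hp : p ∈ frontier K) (hpx : p + x ∈ frontier K)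
    (hφp : φ p ∈ Icc (φ p₂) (φ p₁)) : p = p₁ ∨ p = p₂ := by
  rw [hKc.frontier_eq] at hp hpx
  by_contra! hne
  obtain ⟨c, hc, hφc⟩ :=
    hK.chordStarts.exists_mem_interior_map_eq φ hp₂ hp₁ ⟨hp.1, hpx.1⟩ hne.2 hne.1 hφp
  obtain ⟨r, hr⟩ : ∃ r : ℝ, r • x = c - p :=
    Submodule.mem_span_singleton.1 (hφ ▸ LinearMap.mem_ker.2 (by simp [hφc]))
  rw [interior_chordStarts, ← add_sub_cancel p c, ← hr] at hc
  rcases hK.convex.mem_interior_or_add_mem_interior hp.1 hpx.1 hc.1 hc.2 with h | h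
  exacts [hp.2 h, hpx.2 h]

theorem exists_exactly_two_chords (hE : finrank ℝ E = 2) (hKc : IsCompact K) (hK : StrictConvex ℝ K)
    (hx : x ≠ 0) (hx_int : x ∈ interior (K - K)) :
    ∃ p₁ p₂ : E, p₁ ≠ p₂ ∧
      (p₁ ∈ frontier K ∧ p₁ + x ∈ frontier K ∧ segment ℝ p₁ (p₁ + x) ⊆ K) ∧
      (p₂ ∈ frontier K ∧ p₂ + x ∈ frontier K ∧ segment ℝ p₂ (p₂ + x) ⊆ K) ∧
      ∀ p : E, (p ∈ frontier K ∧ p + x ∈ frontier K ∧ segment ℝ p (p + x) ⊆ K) →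
        p = p₁ ∨ p = p₂ := by
  obtain ⟨φ, hφ⟩ := exists_ker_eq_span_singleton hE hx
  have hφx : φ x = 0 := hφ.ge (Submodule.mem_span_singleton_self x)
  have hφ0 : φ ≠ 0 := fun h => by
    have := finrank_span_singleton (K := ℝ) hx
    rw [← hφ, h, ContinuousLinearMap.toLinearMap_zero, LinearMap.ker_zero, finrank_top, hE] at this
    omega
  have hchord : ∀ ψ : E →L[ℝ] ℝ, ψ ≠ 0 → ψ x = 0 → ∀ p ∈ chordStarts K x,
      IsMaxOn ψ (chordStarts K x) p →
      p ∈ frontier K ∧ p + x ∈ frontier K ∧ segment ℝ p (p + x) ⊆ K := fun ψ hψ hψx p hp hmax =>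
    let ⟨hpK, hpxK⟩ := mem_frontier_of_isMaxOn_chordStarts hKc.isClosed hK.convex hψ hψx hp hmax
    ⟨hpK, hpxK, hK.convex.segment_subset hp.1 hp.2⟩
  have hne := interior_chordStarts_nonempty hK hx hx_int
  obtain ⟨p₁, hp₁, hmax⟩ :=
    hKc.chordStarts.exists_isMaxOn (hne.mono interior_subset) φ.continuous.continuousOn
  obtain ⟨p₂, hp₂, hmax'⟩ :=
    hKc.chordStarts.exists_isMaxOn (hne.mono interior_subset) (-φ).continuous.continuousOn
  have hmin : IsMinOn φ (chordStarts K x) p₂ := fun q hq => by simpa using hmax' hq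
  refine ⟨p₁, p₂, fun h => (φ.lt_of_isMaxOn_of_isMinOn hφ0 hne hmax hmin).ne' (by rw [h]),
    hchord φ hφ0 hφx p₁ hp₁ hmax, hchord (-φ) (neg_ne_zero.2 hφ0) (by simp [hφx]) p₂ hp₂ hmax',
    fun p ⟨hp, hpx, _⟩ => ?_⟩
  have hpL : p ∈ chordStarts K x :=
    ⟨hKc.isClosed.frontier_subset hp, hKc.isClosed.frontier_subset hpx⟩
  exact eq_or_eq_of_mem_frontier hK hKc.isClosed hφ hp₁ hp₂ hp hpx ⟨hmin hpL, hmax hpL⟩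

theorem pansu_wulff_stmt12_general
    (K : Set (EuclideanSpace ℝ (Fin 2)))
    (hK_compact : IsCompact K)
    (hK_strict : ∀ x ∈ K, ∀ y ∈ K, x ≠ y →
      ∀ lam ∈ Set.Ioo (0:ℝ) 1, lam • x + (1 - lam) • y ∈ interior K)
    (x : EuclideanSpace ℝ (Fin 2)) (hx : x ≠ 0) (hx_int : x ∈ interior (K - K)) :
    ∃ p₁ p₂ : EuclideanSpace ℝ (Fin 2), p₁ ≠ p₂ ∧
      (p₁ ∈ frontier K ∧ p₁ + x ∈ frontier K ∧ segment ℝ p₁ (p₁ + x) ⊆ K) ∧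
      (p₂ ∈ frontier K ∧ p₂ + x ∈ frontier K ∧ segment ℝ p₂ (p₂ + x) ⊆ K) ∧
      ∀ p : EuclideanSpace ℝ (Fin 2),
        (p ∈ frontier K ∧ p + x ∈ frontier K ∧ segment ℝ p (p + x) ⊆ K) →
        p = p₁ ∨ p = p₂ := by
  have hK : StrictConvex ℝ K := fun a ha b hb hab s t hs ht hst => by
    obtain rfl : t = 1 - s := by linarith
    exact hK_strict a ha b hb hab s ⟨hs, by linarith⟩
  exact exists_exactly_two_chords finrank_euclideanSpace_fin hK_compact hK hx hx_int

/-- If `K ⊂ ℝ²` is a strictly convex body and `x ≠ 0` lies in the interior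
of the difference body `K - K`, then there are exactly two points `p ∈ ∂K` such that the
segment `[p, p+x]` is contained in `K` with both endpoints on `∂K`. -/
theorem pansu_wulff_stmt12
    (K : Set (EuclideanSpace ℝ (Fin 2)))
    (hK_compact : IsCompact K) (hK_convex : Convex ℝ K)
    (hK_int : (interior K).Nonempty)
    (hK_strict : ∀ x ∈ K, ∀ y ∈ K, x ≠ y →
      ∀ lam ∈ Set.Ioo (0:ℝ) 1, lam • x + (1 - lam) • y ∈ interior K)
    (x : EuclideanSpace ℝ (Fin 2)) (hx : x ≠ 0) (hx_int : x ∈ interior (K - K)) :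
    ∃ p₁ p₂ : EuclideanSpace ℝ (Fin 2), p₁ ≠ p₂ ∧
      (p₁ ∈ frontier K ∧ p₁ + x ∈ frontier K ∧ segment ℝ p₁ (p₁ + x) ⊆ K) ∧
      (p₂ ∈ frontier K ∧ p₂ + x ∈ frontier K ∧ segment ℝ p₂ (p₂ + x) ⊆ K) ∧
      ∀ p : EuclideanSpace ℝ (Fin 2),
        (p ∈ frontier K ∧ p + x ∈ frontier K ∧ segment ℝ p (p + x) ⊆ K) →
        p = p₁ ∨ p = p₂ :=
  pansu_wulff_stmt12_general K hK_compact hK_strict x hx hx_int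
end

section
/- Let K ⊂ ℝ² be a strictly convex body and x ≠ 0. Then x lies on the boundary of the difference body K - K if and only if the length |x| is the maximal length of a segment contained in K with direction x/|x|, and in that case there is exactly one point p ∈ ∂K with [p, p+x] ⊂ K and p + x ∈ ∂K. -/
/-! The difference body `D = K - K` is compact, convex and has `0` in its interior, so `x` lies on
its boundary iff `x ∈ D` but `t • x ∉ D` for every `t > 1`; and `v ∈ D` iff `K` contains a
translate of the segment `[0, v]`, which turns the boundary condition into maximality of `‖x‖`.
Since `int K - K ⊆ int D`, both endpoints of a chord `[p, p + x]` with `x ∈ ∂D` lie on `∂K`. Two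
such chords `[p, p + x] ≠ [q, q + x]` would average to a chord whose endpoint is interior by
strict convexity, putting `x` in `int D`. -/

open Pointwise Set Filter Topology

theorem Convex.exists_segment_subset_iff {E : Type*} [AddCommGroup E] [Module ℝ E] {K : Set E}
    (hK : Convex ℝ K) (v : E) :
    (∃ z, segment ℝ z (z + v) ⊆ K) ↔ v ∈ K - K := by
  constructor
  · rintro ⟨z, hz⟩
    simpa using sub_mem_sub (hz (right_mem_segment ℝ _ _)) (hz (left_mem_segment ℝ _ _))
  · rintro ⟨a, ha, b, hb, rfl⟩
    exact ⟨b, by simpa using hK.segment_subset hb ha⟩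

theorem exists_one_lt_smul_mem_of_mem_interior {E : Type*} [AddCommMonoid E] [TopologicalSpace E]
    [Module ℝ E] [ContinuousSMul ℝ E] {D : Set E} {x : E} (hx : x ∈ interior D) :
    ∃ t : ℝ, 1 < t ∧ t • x ∈ D := by
  have hD : ∀ᶠ t : ℝ in 𝓝 1, t • x ∈ D :=
    (continuous_id.smul continuous_const).continuousAt.preimage_mem_nhds
      (by simpa using mem_interior_iff_mem_nhds.1 hx)
  obtain ⟨t, htD, ht⟩ := ((hD.filter_mono nhdsWithin_le_nhds).and
    (self_mem_nhdsWithin : Ioi (1 : ℝ) ∈ 𝓝[>] 1)).exists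
  exact ⟨t, ht, htD⟩

section DifferenceBody

variable {E : Type*} [AddCommGroup E] [TopologicalSpace E] [IsTopologicalAddGroup E]

theorem IsCompact.sub {s t : Set E} (hs : IsCompact s) (ht : IsCompact t) :
    IsCompact (s - t) := by
  rw [← image2_sub, ← image_prod]
  exact (hs.prod ht).image continuous_sub

theorem zero_mem_interior_sub_self {s : Set E} (hs : (interior s).Nonempty) :
    (0 : E) ∈ interior (s - s) := by
  obtain ⟨c, hc⟩ := hs
  simpa using subset_interior_sub_left (sub_mem_sub hc (interior_subset hc))

theorem mem_frontier_of_add_mem_of_notMem_interior_sub {K : Set E} {p x : E}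
    (hp : p ∈ K) (hpx : p + x ∈ K) (hx : x ∉ interior (K - K)) :
    p ∈ frontier K ∧ p + x ∈ frontier K := by
  refine ⟨⟨subset_closure hp, fun hpi => hx ?_⟩, ⟨subset_closure hpx, fun hpi => hx ?_⟩⟩
  · simpa using subset_interior_sub_right (sub_mem_sub hpx hpi)
  · simpa using subset_interior_sub_left (sub_mem_sub hpi hp)

variable [Module ℝ E]

theorem StrictConvex.eq_of_add_mem_of_notMem_interior_sub {K : Set E} (hK : StrictConvex ℝ K)
    {p q x : E} (hp : p ∈ K) (hpx : p + x ∈ K) (hq : q ∈ K) (hqx : q + x ∈ K)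
    (hx : x ∉ interior (K - K)) : p = q := by
  by_contra hpq
  have hm : (1 / 2 : ℝ) • p + (1 / 2 : ℝ) • q ∈ K :=
    hK.convex hp hq (by norm_num) (by norm_num) (by norm_num)
  have hmx : (1 / 2 : ℝ) • (p + x) + (1 / 2 : ℝ) • (q + x) ∈ interior K :=
    hK hpx hqx (by simpa using hpq) (by norm_num) (by norm_num) (by norm_num)
  have hsum : (1 / 2 : ℝ) • (p + x) + (1 / 2 : ℝ) • (q + x)
      - ((1 / 2 : ℝ) • p + (1 / 2 : ℝ) • q) = x := by
    module
  exact hx (hsum ▸ subset_interior_sub_left (sub_mem_sub hmx hm))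

theorem Convex.mem_interior_of_one_lt_smul_mem [ContinuousConstSMul ℝ E] {D : Set E}
    (hD : Convex ℝ D) (h0 : (0 : E) ∈ interior D) {x : E} {t : ℝ} (ht : 1 < t) (htx : t • x ∈ D) :
    x ∈ interior D := by
  have h := hD.combo_interior_self_mem_interior h0 htx
    (a := 1 - 1 / t) (b := 1 / t) (by bound) (by bound) (by ring)
  rwa [smul_zero, zero_add, smul_smul, one_div, inv_mul_cancel₀ (by positivity), one_smul] at h

theorem Convex.mem_frontier_iff_of_zero_mem_interior [ContinuousSMul ℝ E] {D : Set E}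
    (hD : Convex ℝ D) (hDc : IsClosed D) (h0 : (0 : E) ∈ interior D) {x : E} :
    x ∈ frontier D ↔ x ∈ D ∧ ∀ t : ℝ, 1 < t → t • x ∉ D := by
  refine ⟨fun hx => ⟨hDc.frontier_subset hx, fun t ht htx => hx.2 ?_⟩,
    fun ⟨hx, hmax⟩ => ⟨subset_closure hx, fun hxi => ?_⟩⟩
  · exact hD.mem_interior_of_one_lt_smul_mem h0 ht htx
  · obtain ⟨t, ht, htx⟩ := exists_one_lt_smul_mem_of_mem_interior hxi
    exact hmax t ht htx

end DifferenceBody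

theorem isGreatest_norm_iff_forall_one_lt_smul_notMem {E : Type*} [NormedAddCommGroup E]
    [NormedSpace ℝ E] {D : Set E} {x : E} (hx : x ≠ 0) :
    IsGreatest {L : ℝ | 0 ≤ L ∧ (L / ‖x‖) • x ∈ D} ‖x‖ ↔
      x ∈ D ∧ ∀ t : ℝ, 1 < t → t • x ∉ D := by
  have hxn : 0 < ‖x‖ := norm_pos_iff.2 hx
  constructor
  · rintro ⟨⟨-, hxD⟩, hub⟩
    refine ⟨by simpa [hxn.ne'] using hxD, fun t ht htx => ?_⟩
    have : t * ‖x‖ ≤ ‖x‖ := hub ⟨by positivity, by rwa [mul_div_cancel_right₀ _ hxn.ne']⟩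
    nlinarith
  · rintro ⟨hxD, hmax⟩
    refine ⟨⟨hxn.le, by simpa [hxn.ne'] using hxD⟩, fun L ⟨_, hLD⟩ => ?_⟩
    by_contra! hL
    exact hmax _ ((one_lt_div hxn).2 hL) hLD

/-- For a strictly convex body `K ⊂ ℝ²` and `x ≠ 0`: `x` lies on the
boundary of the difference body `K - K` iff `‖x‖` is the maximal length of a segment
contained in `K` with direction `x/‖x‖`; and in that case there is exactly one `p ∈ ∂K`
with `[p, p+x] ⊆ K` and `p + x ∈ ∂K`. -/
theorem pansu_wulff_stmt13
    (K : Set (EuclideanSpace ℝ (Fin 2)))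
    (hK_compact : IsCompact K) (hK_convex : Convex ℝ K)
    (hK_int : (interior K).Nonempty)
    (hK_strict : ∀ x ∈ K, ∀ y ∈ K, x ≠ y →
      ∀ lam ∈ Set.Ioo (0:ℝ) 1, lam • x + (1 - lam) • y ∈ interior K)
    (x : EuclideanSpace ℝ (Fin 2)) (hx : x ≠ 0) :
    (x ∈ frontier (K - K) ↔
      IsGreatest {L : ℝ | 0 ≤ L ∧ ∃ z : EuclideanSpace ℝ (Fin 2),
        segment ℝ z (z + (L / ‖x‖) • x) ⊆ K} ‖x‖) ∧
    (x ∈ frontier (K - K) →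
      ∃! p : EuclideanSpace ℝ (Fin 2),
        p ∈ frontier K ∧ p + x ∈ frontier K ∧ segment ℝ p (p + x) ⊆ K) := by
  have hfrontier := (hK_convex.sub hK_convex).mem_frontier_iff_of_zero_mem_interior
    (hK_compact.sub hK_compact).isClosed (zero_mem_interior_sub_self hK_int) (x := x)
  have hstrict : StrictConvex ℝ K := fun p hp q hq hpq a b ha hb hab => by
    obtain rfl : b = 1 - a := by linarith
    exact hK_strict p hp q hq hpq a ⟨ha, by linarith⟩
  refine ⟨?_, fun hxfr => ?_⟩
  · simp_rw [hK_convex.exists_segment_subset_iff]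
    rw [isGreatest_norm_iff_forall_one_lt_smul_notMem hx, hfrontier]
  obtain ⟨a, ha, p, hp, hap⟩ := (hfrontier.1 hxfr).1
  obtain rfl : a = p + x := by rw [← hap, add_sub_cancel]
  have hpx := mem_frontier_of_add_mem_of_notMem_interior_sub hp ha hxfr.2
  refine ⟨p, ⟨hpx.1, hpx.2, hK_convex.segment_subset hp ha⟩, fun q ⟨hq, hqx, _⟩ => ?_⟩
  exact hstrict.eq_of_add_mem_of_notMem_interior_sub (hK_compact.isClosed.frontier_subset hq)
    (hK_compact.isClosed.frontier_subset hqx) hp ha hxfr.2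
end
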